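/- For every ξ ∈ ℂ with 0 < |ξ| < 1, all β, β' ∈ ℂ, every integer m ≥ 0, and every c with |ξ| < c < 1/|ξ|, one has (2πi)^{-1} ∮_{|η|=c} (1 − ξη)^{β} (1 − ξ/η)^{−β'} η^{m−1} dη = ((β')_m / m!) · ξ^m · F(β'+m, −β; m+1; ξ²). -/

import Mathlib

open Complex

/-- The Pochhammer symbol `(a)_m = a (a+1) ⋯ (a+m−1)`, with `(a)_0 = 1`. -/
noncomputable def pochhammer' (a : ℂ) (m : ℕ) : ℂ := ∏ k ∈ Finset.range m, (a + (k : ℂ))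

/-- The Gauss hypergeometric function `F(a, b; c; x)` with positive integer
parameter `c`. -/
noncomputable def gaussHyp (a b : ℂ) (c : ℕ) (x : ℂ) : ℂ :=
  ∑' n : ℕ, pochhammer' a n * pochhammer' b n * x ^ n /
    (pochhammer' (c : ℂ) n * (n.factorial : ℂ))

/-! On the circle `|η| = c` both binomial series converge absolutely:
`(1 - ξη)^β = ∑ⱼ (-β)ⱼ/j! ξʲ ηʲ` and `(1 - ξ/η)^(-β') = ∑ₖ (β')ₖ/k! ξᵏ η⁻ᵏ`. Multiplying them
by `η^(m-1)` and integrating term by term (dominated convergence), only the terms with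
`k = j + m` survive, because `∮ ηⁿ dη` is `2πi` for `n = -1` and `0` otherwise. The surviving
series `∑ⱼ (-β)ⱼ (β')ⱼ₊ₘ ξ^(2j+m) / (j! (j+m)!)` is the hypergeometric one once
`(β')ⱼ₊ₘ = (β')ₘ (β'+m)ⱼ` and `(j+m)! = m! (m+1)ⱼ`. -/

open Metric Polynomial

lemma pochhammer'_eq_eval_ascPochhammer (a : ℂ) (n : ℕ) :
    pochhammer' a n = (ascPochhammer ℂ n).eval a := by
  induction n with
  | zero => simp [pochhammer']
  | succ n ih =>
    rw [pochhammer', Finset.prod_range_succ, ← pochhammer', ih, ascPochhammer_succ_right]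
    simp

lemma pochhammer'_add (a : ℂ) (m n : ℕ) :
    pochhammer' a (m + n) = pochhammer' a m * pochhammer' (a + m) n := by
  simp only [pochhammer'_eq_eval_ascPochhammer, ← ascPochhammer_mul, eval_mul, eval_comp,
    eval_add, eval_X, eval_natCast]

lemma factorial_mul_pochhammer'_succ (m n : ℕ) :
    (m.factorial : ℂ) * pochhammer' (m + 1) n = (m + n).factorial := by
  rw [pochhammer'_eq_eval_ascPochhammer, factorial_mul_ascPochhammer]

lemma pochhammer'_add_div_factorial (a : ℂ) (m n : ℕ) :
    pochhammer' a (m + n) / (m + n).factorial =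
      pochhammer' a m / m.factorial * (pochhammer' (a + m) n / pochhammer' (m + 1) n) := by
  have h := factorial_mul_pochhammer'_succ m n
  have hmn : ((m + n).factorial : ℂ) ≠ 0 := Nat.cast_ne_zero.2 (Nat.factorial_ne_zero _)
  have hm : (m.factorial : ℂ) ≠ 0 := Nat.cast_ne_zero.2 (Nat.factorial_ne_zero _)
  have hn : pochhammer' (m + 1) n ≠ 0 := right_ne_zero_of_mul (h ▸ hmn)
  rw [pochhammer'_add, ← h]
  field_simp

lemma pochhammer'_neg_div_factorial (a : ℂ) (n : ℕ) :
    pochhammer' (-a) n / n.factorial = (-1) ^ n * Ring.choose a n := by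
  rw [pochhammer'_eq_eval_ascPochhammer, ascPochhammer_eval_neg_eq_descPochhammer,
    Ring.choose_eq_smul, ← aeval_eq_smeval, aeval_def, eval₂_eq_eval_map, descPochhammer_map,
    smul_eq_mul]
  ring

lemma binomialSeries_apply_neg (β z : ℂ) (n : ℕ) :
    binomialSeries ℂ β n (fun _ => -z) = pochhammer' (-β) n / n.factorial * z ^ n := by
  rw [binomialSeries_apply, pochhammer'_neg_div_factorial, List.ofFn_const, List.prod_replicate,
    smul_eq_mul, neg_pow]
  ring

lemma neg_mem_eball_zero_one {z : ℂ} (hz : ‖z‖ < 1) : -z ∈ eball (0 : ℂ) 1 := by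
  rwa [← ENNReal.ofReal_one, eball_ofReal, mem_ball_zero_iff, norm_neg]

lemma hasSum_one_sub_cpow (β : ℂ) {z : ℂ} (hz : ‖z‖ < 1) :
    HasSum (fun n => pochhammer' (-β) n / n.factorial * z ^ n) ((1 - z) ^ β) := by
  have := (one_add_cpow_hasFPowerSeriesOnBall_zero (a := β)).hasSum (neg_mem_eball_zero_one hz)
  simpa only [zero_add, binomialSeries_apply_neg, zero_sub, ← sub_eq_add_neg] using this

lemma hasSum_one_sub_mul_cpow (β : ℂ) {ξ z : ℂ} (hz : ‖ξ‖ * ‖z‖ < 1) :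
    HasSum (fun n => pochhammer' (-β) n / n.factorial * ξ ^ n * z ^ n) ((1 - ξ * z) ^ β) := by
  refine (hasSum_one_sub_cpow β (by rwa [norm_mul])).congr_fun fun n => ?_
  rw [mul_pow, mul_assoc]

lemma summable_norm_pochhammer'_div_factorial_mul_pow (a : ℂ) {r : ℝ} (hr0 : 0 ≤ r)
    (hr : r < 1) : Summable fun n => ‖pochhammer' a n / n.factorial‖ * r ^ n := by
  have hr' : -(r : ℂ) ∈ eball (0 : ℂ) (binomialSeries ℂ (-a)).radius :=
    eball_subset_eball binomialSeries_radius_ge_one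
      (neg_mem_eball_zero_one (by simpa [abs_of_nonneg hr0] using hr))
  refine ((binomialSeries ℂ (-a)).summable_norm_apply hr').congr fun n => ?_
  rw [binomialSeries_apply_neg, neg_neg, norm_mul, norm_pow, norm_real, Real.norm_of_nonneg hr0]

lemma summable_norm_pochhammer'_div_factorial_mul_pow_mul_pow (a : ℂ) {ξ : ℂ} {r : ℝ}
    (hr0 : 0 ≤ r) (hr : ‖ξ‖ * r < 1) :
    Summable fun n => ‖pochhammer' a n / n.factorial * ξ ^ n‖ * r ^ n := by
  refine (summable_norm_pochhammer'_div_factorial_mul_pow a (by positivity) hr).congr fun n => ?_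
  rw [norm_mul, norm_pow, mul_pow, mul_assoc]

theorem hasSum_circleIntegral_of_dominated {ι E : Type*} [Countable ι] [NormedAddCommGroup E]
    [NormedSpace ℂ E] {f : ι → ℂ → E} {g : ℂ → E} {c : ℂ} {R : ℝ}
    (u : ι → ℝ) (hf : ∀ i, CircleIntegrable (f i) c R)
    (hfu : ∀ i, ∀ z ∈ sphere c |R|, ‖f i z‖ ≤ u i) (hu : Summable u)
    (hfg : ∀ z ∈ sphere c |R|, HasSum (fun i => f i z) (g z)) :
    HasSum (fun i => ∮ z in C(c, R), f i z) (∮ z in C(c, R), g z) := by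
  refine intervalIntegral.hasSum_integral_of_dominated_convergence (fun i _ => |R| * u i)
    (fun i => (hf i).out.def'.aestronglyMeasurable) (fun i => ?_)
    (.of_forall fun _ _ => hu.mul_left |R|) intervalIntegrable_const
    (.of_forall fun θ _ => (hfg _ (circleMap_mem_sphere' c R θ)).const_smul _)
  refine .of_forall fun θ _ => ?_
  rw [norm_smul, deriv_circleMap, norm_mul, norm_circleMap_zero, norm_I, mul_one]
  exact mul_le_mul_of_nonneg_left (hfu i _ (circleMap_mem_sphere' c R θ)) (abs_nonneg R)

theorem circleIntegral_zpow {R : ℝ} (hR : R ≠ 0) (n : ℤ) :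
    (∮ z in C(0, R), z ^ n) = if n = -1 then 2 * Real.pi * I else 0 := by
  split_ifs with hn
  · simpa [hn] using circleIntegral.integral_sub_center_inv 0 hR
  · simpa using circleIntegral.integral_sub_zpow_of_ne hn 0 0 R

lemma circleIntegral_mul_pow_mul_inv_pow_mul_zpow {R : ℝ} (hR : 0 < R) (a b : ℂ) (j k m : ℕ) :
    (∮ z in C(0, R), a * z ^ j * (b * z⁻¹ ^ k) * z ^ ((m : ℤ) - 1)) =
      if k = j + m then a * b * (2 * Real.pi * I) else 0 := by
  have hEq : Set.EqOn (fun z => a * z ^ j * (b * z⁻¹ ^ k) * z ^ ((m : ℤ) - 1))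
      (fun z => a * b * z ^ ((j : ℤ) - k + m - 1)) (sphere (0 : ℂ) R) := fun z hz => by
    have hz : z ≠ 0 := ne_zero_of_mem_sphere hR.ne' ⟨z, hz⟩
    simp only [zpow_sub₀ hz, zpow_add₀ hz, zpow_natCast, inv_pow, zpow_one]
    ring
  rw [circleIntegral.integral_congr hR.le hEq, circleIntegral.integral_const_mul,
    circleIntegral_zpow hR.ne']
  by_cases hk : k = j + m
  · rw [if_pos (by omega), if_pos hk]
  · rw [if_neg (by omega), if_neg hk, mul_zero]

lemma HasSum.of_ite_snd_eq_fst_add {E : Type*} [AddCommMonoid E] [TopologicalSpace E]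
    {F : ℕ × ℕ → E} {s : E} {m : ℕ} (h : HasSum (fun p => if p.2 = p.1 + m then F p else 0) s) :
    HasSum (fun j => F (j, j + m)) s := by
  have hinj : Function.Injective fun j => (j, j + m) := fun _ _ h => (Prod.ext_iff.mp h).1
  have hoff : ∀ p ∉ Set.range fun j => (j, j + m), (if p.2 = p.1 + m then F p else 0) = 0 :=
    fun p hp => if_neg fun h => hp ⟨p.1, Prod.ext rfl h.symm⟩
  exact ((hinj.hasSum_iff hoff).mpr h).congr_fun fun j => (if_pos rfl).symm

theorem hasSum_circleIntegral_mul_mul_zpow {a b : ℕ → ℂ} {f g : ℂ → ℂ} {R : ℝ} (hR : 0 < R)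
    (ha : Summable fun j => ‖a j‖ * R ^ j) (hb : Summable fun k => ‖b k‖ * R⁻¹ ^ k)
    (hf : ∀ z ∈ sphere 0 R, HasSum (fun j => a j * z ^ j) (f z))
    (hg : ∀ z ∈ sphere 0 R, HasSum (fun k => b k * z⁻¹ ^ k) (g z)) (m : ℕ) :
    HasSum (fun j => a j * b (j + m))
      ((2 * Real.pi * I)⁻¹ * ∮ z in C(0, R), f z * g z * z ^ ((m : ℤ) - 1)) := by
  set T : ℕ × ℕ → ℂ → ℂ := fun p z => a p.1 * z ^ p.1 * (b p.2 * z⁻¹ ^ p.2) * z ^ ((m : ℤ) - 1)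
  have hT : HasSum (fun p => ∮ z in C(0, R), T p z)
      (∮ z in C(0, R), f z * g z * z ^ ((m : ℤ) - 1)) := by
    refine hasSum_circleIntegral_of_dominated
      (fun p => ‖a p.1‖ * R ^ p.1 * (‖b p.2‖ * R⁻¹ ^ p.2) * R ^ ((m : ℤ) - 1))
      (fun p => ?_) (fun p z hz => ?_) ?_ (fun z hz => ?_)
    · refine ContinuousOn.circleIntegrable' fun z hz => ContinuousAt.continuousWithinAt ?_
      rw [abs_of_pos hR] at hz
      have hz0 : z ≠ 0 := ne_zero_of_mem_sphere hR.ne' ⟨z, hz⟩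
      simp only [T]
      fun_prop (disch := first | assumption | exact Or.inl hz0)
    · rw [abs_of_pos hR] at hz
      simp only [T, norm_mul, norm_pow, norm_inv, norm_zpow, mem_sphere_zero_iff_norm.mp hz,
        le_refl]
    · exact (ha.mul_of_nonneg hb (fun _ => by positivity) fun _ => by positivity).mul_right _
    · rw [abs_of_pos hR] at hz
      have hzR := mem_sphere_zero_iff_norm.mp hz
      have hprod : Summable fun p : ℕ × ℕ => a p.1 * z ^ p.1 * (b p.2 * z⁻¹ ^ p.2) :=
        summable_mul_of_summable_norm (f := fun j => a j * z ^ j) (g := fun k => b k * z⁻¹ ^ k)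
          (by simpa only [norm_mul, norm_pow, hzR] using ha)
          (by simpa only [norm_mul, norm_pow, norm_inv, hzR] using hb)
      exact ((hf z hz).mul (hg z hz) hprod).mul_right _
  simp only [T, circleIntegral_mul_pow_mul_inv_pow_mul_zpow hR] at hT
  refine (hT.of_ite_snd_eq_fst_add.mul_left (2 * Real.pi * I)⁻¹).congr_fun fun j => ?_
  field_simp

theorem gauss_contour_integral'_general
    (ξ : ℂ) (β β' : ℂ) (m : ℕ) (c : ℝ)
    (hc1 : ‖ξ‖ < c) (hc2 : c < 1 / ‖ξ‖) :
    (2 * Real.pi * Complex.I)⁻¹ *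
        (∮ η in C(0, c),
          (1 - ξ * η) ^ β * (1 - ξ / η) ^ (-β') * η ^ ((m : ℤ) - 1)) =
      pochhammer' β' m / (m.factorial : ℂ) * ξ ^ m *
        gaussHyp (β' + m) (-β) (m + 1) (ξ ^ 2) := by
  have hc : 0 < c := (norm_nonneg ξ).trans_lt hc1
  have hξc : ‖ξ‖ * c < 1 := by
    rcases (norm_nonneg ξ).eq_or_lt with hξ | hξ
    · simp [← hξ]
    · exact (lt_div_iff₀' hξ).mp hc2
  have hξc' : ‖ξ‖ * c⁻¹ < 1 := by rwa [← div_eq_mul_inv, div_lt_one hc]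
  have hsum := hasSum_circleIntegral_mul_mul_zpow (g := fun η => (1 - ξ / η) ^ (-β')) hc
    (summable_norm_pochhammer'_div_factorial_mul_pow_mul_pow (-β) hc.le hξc)
    (summable_norm_pochhammer'_div_factorial_mul_pow_mul_pow β' (by positivity) hξc')
    (fun z hz => hasSum_one_sub_mul_cpow β (by rwa [mem_sphere_zero_iff_norm.mp hz]))
    (fun z hz => by
      rw [div_eq_mul_inv]
      simpa only [neg_neg] using hasSum_one_sub_mul_cpow (-β')
        (by rwa [norm_inv, mem_sphere_zero_iff_norm.mp hz])) m
  rw [← hsum.tsum_eq, gaussHyp, ← tsum_mul_left]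
  refine tsum_congr fun j => ?_
  rw [add_comm j m, pochhammer'_add_div_factorial]
  push_cast
  ring

theorem gauss_contour_integral'
    (ξ : ℂ) (hξ0 : ξ ≠ 0) (hξ1 : ‖ξ‖ < 1) (β β' : ℂ) (m : ℕ) (c : ℝ)
    (hc1 : ‖ξ‖ < c) (hc2 : c < 1 / ‖ξ‖) :
    (2 * Real.pi * Complex.I)⁻¹ *
        (∮ η in C(0, c),
          (1 - ξ * η) ^ β * (1 - ξ / η) ^ (-β') * η ^ ((m : ℤ) - 1)) =
      pochhammer' β' m / (m.factorial : ℂ) * ξ ^ m *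
        gaussHyp (β' + m) (-β) (m + 1) (ξ ^ 2) :=
  gauss_contour_integral'_general ξ β β' m c hc1 hc2
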